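/- For every positive integer n, the number A(n) = (-3)^{n(n-1)/2} ∏_{i,j=1}^n (3(j-i)+1)/(j-i+n) is a positive integer. -/

import Mathlib

/-!
Index rows and columns from `0`. Row `k` of the double product is
`(-1)^k ∏_{t<k} (3t+2) · ∏_{t<n-k} (3t+1) · (n-1-k)! / (2n-1-k)!`,
and `(-3)^(n(n-1)/2) = ∏_{k<n} (-3)^k` absorbs the signs. Reflecting `k ↦ n-1-k` in the factors indexed by `n-1-k` and using
`(3k+1)! = 3^k k! ∏_{t<k} (3t+2) ∏_{t≤k} (3t+1)`, the number becomes `∏_{k<n} (3k+1)! / (n+k)!`.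

By Legendre's formula this quotient is an integer as soon as
`∑_{k<n} ⌊(n+k)/q⌋ ≤ ∑_{k<n} ⌊(3k+1)/q⌋` for every `q ≥ 1`. Replacing `n` by `n + q` adds the same
amount to both sides, so it suffices to take `n ≤ q`; then the left side counts the `k` with
`q ≤ n + k`, and the right side is at least the number of `k` with `q ≤ 3k+1` plus the number
with `2q ≤ 3k+1`.
-/

open Finset Nat

theorem sum_range_add_eq_of_map_add {M : Type*} [AddCancelCommMonoid M] {f : ℕ → M} {q : ℕ}
    {c : M} (hf : ∀ x, f (x + q) = f x + c) (a : ℕ) :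
    ∑ t ∈ range q, f (a + t) = ∑ t ∈ range q, f t + a • c := by
  induction a with
  | zero => simp
  | succ a ih =>
    have hsucc := (sum_range_succ' (fun t => f (a + t)) q).symm.trans
      (sum_range_succ (fun t => f (a + t)) q)
    rw [add_zero, hf, ← add_assoc, add_right_comm _ (f a)] at hsucc
    simp only [add_assoc a 1, add_comm 1]
    rw [add_right_cancel hsucc, ih, succ_nsmul, ← add_assoc, add_right_comm]

theorem sum_range_boole_le_eq_sub (n c : ℕ) : (∑ k ∈ range n, if c ≤ k then 1 else 0) = n - c := by
  induction n with
  | zero => simp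
  | succ n ih => rw [sum_range_succ, ih]; split_ifs <;> omega

section FloorSums

variable {q : ℕ}

theorem sum_range_add_div_le_of_le (hq : 0 < q) {n : ℕ} (hn : n ≤ q) :
    ∑ k ∈ range n, (n + k) / q ≤ ∑ k ∈ range n, (3 * k + 1) / q := by
  have hleft : ∀ k ∈ range n, (n + k) / q = if q - n ≤ k then 1 else 0 := by
    intro k hk
    rw [mem_range] at hk
    split_ifs
    · exact Nat.div_eq_of_lt_le (by omega) (by omega)
    · exact Nat.div_eq_of_lt (by omega)
  have hright : ∀ k ∈ range n,
      ((if (q + 1) / 3 ≤ k then 1 else 0) + if (2 * q + 1) / 3 ≤ k then 1 else 0) ≤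
        (3 * k + 1) / q := by
    intro k _
    split_ifs
    · exact (Nat.le_div_iff_mul_le hq).2 (by omega)
    · exact (Nat.le_div_iff_mul_le hq).2 (by omega)
    · omega
    · exact Nat.zero_le _
  rw [sum_congr rfl hleft, sum_range_boole_le_eq_sub]
  refine le_trans ?_ (sum_le_sum hright)
  rw [sum_add_distrib, sum_range_boole_le_eq_sub, sum_range_boole_le_eq_sub]
  omega

theorem sum_range_three_mul_add_one_div_add (hq : 0 < q) (m : ℕ) :
    ∑ k ∈ range (m + q), (3 * k + 1) / q =
      ∑ k ∈ range m, (3 * k + 1) / q + 3 * m + ∑ k ∈ range q, (3 * k + 1) / q := by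
  have hperiod : ∀ x, (3 * (x + q) + 1) / q = (3 * x + 1) / q + 3 := fun x => by
    rw [show 3 * (x + q) + 1 = 3 * x + 1 + 3 * q by ring, Nat.add_mul_div_right _ _ hq]
  rw [sum_range_add, sum_range_add_eq_of_map_add (f := fun x => (3 * x + 1) / q) hperiod,
    smul_eq_mul]
  ring

theorem sum_range_add_div_add (hq : 0 < q) (m : ℕ) :
    ∑ k ∈ range (m + q), (m + q + k) / q =
      ∑ k ∈ range m, (m + k) / q + 3 * m + ∑ k ∈ range q, (q + k) / q := by
  have hperiod : ∀ x, (x + q) / q = x / q + 1 := fun x => Nat.add_div_right x hq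
  have hshift : ∀ k ∈ range m, (m + q + k) / q = (m + k) / q + 1 := fun k _ => by
    rw [add_right_comm, hperiod]
  have hblock : ∀ a, ∑ t ∈ range q, (a + t) / q = ∑ t ∈ range q, t / q + a := fun a => by
    rw [sum_range_add_eq_of_map_add (f := fun x => x / q) hperiod, smul_eq_mul, mul_one]
  simp only [sum_range_add, sum_congr rfl hshift, sum_add_distrib, ← add_assoc, hblock,
    sum_const, card_range, smul_eq_mul, mul_one]
  ring

theorem sum_range_add_div_le (hq : 0 < q) (n : ℕ) :
    ∑ k ∈ range n, (n + k) / q ≤ ∑ k ∈ range n, (3 * k + 1) / q := by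
  induction n using Nat.strong_induction_on with
  | _ n ih =>
    rcases le_or_gt n q with hn | hn
    · exact sum_range_add_div_le_of_le hq hn
    · obtain ⟨m, rfl⟩ : ∃ m, n = m + q := ⟨n - q, by omega⟩
      rw [sum_range_add_div_add hq, sum_range_three_mul_add_one_div_add hq]
      have := ih m (by omega)
      have := sum_range_add_div_le_of_le hq le_rfl
      omega

end FloorSums

theorem prod_factorial_dvd_prod_factorial {ι : Type*} (s : Finset ι) (a b : ι → ℕ)
    (h : ∀ q, 0 < q → ∑ i ∈ s, a i / q ≤ ∑ i ∈ s, b i / q) :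
    ∏ i ∈ s, (a i)! ∣ ∏ i ∈ s, (b i)! := by
  rw [← Nat.factorization_le_iff_dvd (prod_ne_zero_iff.2 fun i _ => factorial_ne_zero _)
    (prod_ne_zero_iff.2 fun i _ => factorial_ne_zero _), Finsupp.le_def]
  intro p
  simp only [Nat.factorization_prod fun i _ => factorial_ne_zero _, Finsupp.coe_finsetSum,
    Finset.sum_apply]
  by_cases hp : p.Prime
  · set B := ∑ i ∈ s, (a i + b i) + 1
    have hB : ∀ i ∈ s, Nat.log p (a i) < B ∧ Nat.log p (b i) < B := fun i hi => by
      have := single_le_sum (f := fun i => a i + b i) (fun _ _ => Nat.zero_le _) hi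
      exact ⟨(Nat.log_le_self p _).trans_lt (by omega), (Nat.log_le_self p _).trans_lt (by omega)⟩
    rw [sum_congr rfl fun i hi => factorization_factorial hp (hB i hi).1,
      sum_congr rfl fun i hi => factorization_factorial hp (hB i hi).2, sum_comm,
      sum_comm (s := s)]
    exact sum_le_sum fun j _ => h _ (pow_pos hp.pos j)
  · simp [Nat.factorization_eq_zero_of_not_prime _ hp]

theorem prod_range_factorial_dvd (n : ℕ) :
    ∏ k ∈ range n, (n + k)! ∣ ∏ k ∈ range n, (3 * k + 1)! :=
  prod_factorial_dvd_prod_factorial _ _ _ fun _ hq => sum_range_add_div_le hq n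

theorem factorial_three_mul_add_one (k : ℕ) :
    (3 * k + 1)! =
      3 ^ k * k ! * (∏ t ∈ range k, (3 * t + 2)) * ∏ t ∈ range (k + 1), (3 * t + 1) := by
  induction k with
  | zero => simp
  | succ k ih =>
    rw [show 3 * (k + 1) + 1 = 3 * k + 1 + 1 + 1 + 1 by ring, factorial_succ, factorial_succ,
      factorial_succ, ih, prod_range_succ (fun t => 3 * t + 2) k,
      prod_range_succ (fun t => 3 * t + 1) (k + 1),
      factorial_succ, pow_succ]
    ring

theorem prod_range_three_mul_sub_add_one (k r : ℕ) :
    ∏ l ∈ range (k + r), (3 * ((l : ℚ) - k) + 1) =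
      (-1) ^ k * (∏ t ∈ range k, (3 * (t : ℚ) + 2)) * ∏ t ∈ range r, (3 * (t : ℚ) + 1) := by
  have hneg := prod_neg (s := range k) fun t => 3 * (t : ℚ) + 2
  rw [card_range] at hneg
  rw [prod_range_add, ← hneg, ← prod_range_reflect _ k]
  congr 1
  · refine prod_congr rfl fun t ht => ?_
    rw [mem_range] at ht
    rw [Nat.cast_sub (by omega), Nat.cast_sub (by omega)]
    push_cast
    ring
  · refine prod_congr rfl fun t _ => ?_
    push_cast
    ring

theorem factorial_mul_prod_range_add (r n : ℕ) :
    (r ! : ℚ) * ∏ l ∈ range n, ((r : ℚ) + 1 + l) = ((r + n)! : ℚ) := by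
  rw [← factorial_mul_ascFactorial, ascFactorial_eq_prod_range]
  push_cast
  rfl

theorem prod_range_three_mul_sub_add_one_div {n k : ℕ} (hk : k < n) :
    ∏ l ∈ range n, (3 * ((l : ℚ) - k) + 1) / ((l : ℚ) - k + n) =
      (-1) ^ k * (∏ t ∈ range k, (3 * (t : ℚ) + 2)) *
        ((∏ t ∈ range (n - 1 - k + 1), (3 * (t : ℚ) + 1)) * (n - 1 - k)! / (n + (n - 1 - k))!) := by
  obtain ⟨r, rfl⟩ : ∃ r, n = k + (r + 1) := ⟨n - 1 - k, by omega⟩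
  have hr : k + (r + 1) - 1 - k = r := by omega
  have hden : ∏ l ∈ range (k + (r + 1)), ((l : ℚ) - k + ↑(k + (r + 1))) =
      ∏ l ∈ range (k + (r + 1)), ((r : ℚ) + 1 + l) :=
    prod_congr rfl fun l _ => by push_cast; ring
  rw [hr, prod_div_distrib, prod_range_three_mul_sub_add_one, hden, add_comm _ r,
    ← factorial_mul_prod_range_add r, mul_comm (r ! : ℚ), mul_div_mul_right _ _ (by positivity)]
  ring

theorem prod_Icc_one_eq_prod_range {M : Type*} [CommMonoid M] (f : ℕ → M) (n : ℕ) :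
    ∏ i ∈ Icc 1 n, f i = ∏ k ∈ range n, f (k + 1) := by
  rw [range_eq_Ico, prod_Ico_add' f 0 n 1, zero_add, Ico_add_one_right_eq_Icc]

theorem neg_three_pow_mul_prod_Icc_eq_prod_factorial_div (n : ℕ) :
    (-3 : ℚ) ^ (n * (n - 1) / 2) *
        ∏ i ∈ Icc 1 n, ∏ j ∈ Icc 1 n, (3 * ((j : ℚ) - i) + 1) / ((j : ℚ) - i + n) =
      (∏ k ∈ range n, ((3 * k + 1)! : ℚ)) / ∏ k ∈ range n, ((n + k)! : ℚ) := by
  simp only [prod_Icc_one_eq_prod_range _ n, Nat.cast_add, Nat.cast_one, add_sub_add_right_eq_sub]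
  rw [← sum_range_id, ← prod_pow_eq_pow_sum, ← prod_mul_distrib]
  have hrow : ∀ k ∈ range n,
      (-3 : ℚ) ^ k * ∏ l ∈ range n, (3 * ((l : ℚ) - k) + 1) / ((l : ℚ) - k + n) =
        3 ^ k * (∏ t ∈ range k, (3 * (t : ℚ) + 2)) *
          ((∏ t ∈ range (n - 1 - k + 1), (3 * (t : ℚ) + 1)) * (n - 1 - k)! /
            (n + (n - 1 - k))!) := fun k hk => by
    rw [prod_range_three_mul_sub_add_one_div (mem_range.1 hk),
      show (3 : ℚ) ^ k = (-3) ^ k * (-1) ^ k by rw [← mul_pow]; norm_num]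
    ring
  rw [prod_congr rfl hrow, prod_mul_distrib,
    prod_range_reflect (fun j => (∏ t ∈ range (j + 1), (3 * (t : ℚ) + 1)) * j ! / (n + j)!) n,
    ← prod_mul_distrib, ← prod_div_distrib]
  refine prod_congr rfl fun k _ => ?_
  rw [factorial_three_mul_add_one]
  push_cast
  ring

theorem asm_count_is_positive_integer_general (n : ℕ) :
    ∃ m : ℕ, 0 < m ∧
      (-3 : ℚ) ^ (n * (n - 1) / 2) *
        ∏ i ∈ Finset.Icc 1 n, ∏ j ∈ Finset.Icc 1 n,
          (3 * ((j : ℚ) - (i : ℚ)) + 1) / ((j : ℚ) - (i : ℚ) + (n : ℚ)) = (m : ℚ) := by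
  have hdvd := prod_range_factorial_dvd n
  refine ⟨(∏ k ∈ range n, (3 * k + 1)!) / ∏ k ∈ range n, (n + k)!,
    Nat.div_pos (Nat.le_of_dvd (by positivity) hdvd) (by positivity), ?_⟩
  rw [Nat.cast_div hdvd (by positivity), neg_three_pow_mul_prod_Icc_eq_prod_factorial_div]
  push_cast
  rfl

theorem asm_count_is_positive_integer (n : ℕ) (hn : 1 ≤ n) :
    ∃ m : ℕ, 0 < m ∧
      (-3 : ℚ) ^ (n * (n - 1) / 2) *
        ∏ i ∈ Finset.Icc 1 n, ∏ j ∈ Finset.Icc 1 n,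
          (3 * ((j : ℚ) - (i : ℚ)) + 1) / ((j : ℚ) - (i : ℚ) + (n : ℚ)) = (m : ℚ) :=
  asm_count_is_positive_integer_general n
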